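/- Let A = [[2, 0], [0, 1]] and C = [[2, 1], [1, 1]] as operators on ℂ², and set K = { x⊗̲y : x, y ∈ ℂ², ‖x‖‖y‖ + ‖Ax‖‖y‖ + ‖Cx‖‖y‖ ≤ 1 }. Then the operator T = (1/8)·I does not belong to the convex hull conv(K). -/

import Mathlib

/-!
The real functional `φ S = Re tr ((I + A + C) S)` separates `T` from `K`. On the one hand
`φ T = tr (I + A + C) / 8 = 1`. On the other hand `φ (x ⊗̲ y) = Re ⟨(I + A + C) x, y⟩`, which by
Cauchy–Schwarz is at most `(‖x‖ + ‖Ax‖ + ‖Cx‖) ‖y‖ ≤ 1`, with equality only if `x`, `Ax` and `Cx`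
are all multiples of `y`, i.e. `x` is a common eigenvector of `A` and `C`; these have none. So
`φ < 1` on `K`, hence on `conv(K)`.
-/

/-- The rank-one operator `x ⊗̲ y : f ↦ ⟨f,y⟩x` (inner product linear in the first,
conjugate-linear in the second variable). -/
noncomputable def rankOne {H : Type*} [NormedAddCommGroup H] [InnerProductSpace ℂ H]
    (x y : H) : H →L[ℂ] H := (innerSL ℂ y).smulRight x

/-- The operator on `ℂ²` given by the matrix `[[2, 0], [0, 1]]`. -/
noncomputable def opA : EuclideanSpace ℂ (Fin 2) →L[ℂ] EuclideanSpace ℂ (Fin 2) :=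
  Matrix.toEuclideanCLM (𝕜 := ℂ) !![2, 0; 0, 1]

/-- The operator on `ℂ²` given by the matrix `[[2, 1], [1, 1]]`. -/
noncomputable def opC : EuclideanSpace ℂ (Fin 2) →L[ℂ] EuclideanSpace ℂ (Fin 2) :=
  Matrix.toEuclideanCLM (𝕜 := ℂ) !![2, 1; 1, 1]

open scoped InnerProductSpace

local notation "ℂ²" => EuclideanSpace ℂ (Fin 2)

section CauchySchwarz

variable {𝕜 E : Type*} [RCLike 𝕜] [NormedAddCommGroup E] [InnerProductSpace 𝕜 E]

lemma eq_smul_of_re_inner_eq_norm_mul_norm {x y : E} (hx : x ≠ 0)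
    (h : RCLike.re ⟪x, y⟫_𝕜 = ‖x‖ * ‖y‖) : y = (‖y‖ / ‖x‖ : 𝕜) • x := by
  have hre : (RCLike.re ⟪x, y⟫_𝕜 : 𝕜) = ⟪x, y⟫_𝕜 :=
    RCLike.re_eq_self_of_le (h ▸ norm_inner_le_norm x y)
  refine ((inner_eq_norm_mul_iff_div hx).1 ?_).symm
  rw [← hre, h, RCLike.ofReal_mul]

lemma re_inner_add_add_lt_of_no_common_eigenvector {A C : E → E}
    (hAC : ∀ (x : E) (a c : 𝕜), A x = a • x → C x = c • x → x = 0) {x y : E}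
    (hx : x ≠ 0) (hy : y ≠ 0) :
    RCLike.re ⟪y, x + A x + C x⟫_𝕜 < ‖x‖ * ‖y‖ + ‖A x‖ * ‖y‖ + ‖C x‖ * ‖y‖ := by
  have h1 := re_inner_le_norm (𝕜 := 𝕜) y x
  have h2 := re_inner_le_norm (𝕜 := 𝕜) y (A x)
  have h3 := re_inner_le_norm (𝕜 := 𝕜) y (C x)
  rw [inner_add_right, inner_add_right, map_add, map_add]
  by_contra! hge
  obtain ⟨r, hxy⟩ : ∃ r : 𝕜, x = r • y :=
    ⟨_, eq_smul_of_re_inner_eq_norm_mul_norm hy (by linarith)⟩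
  obtain ⟨a, hAx⟩ : ∃ a : 𝕜, A x = a • y :=
    ⟨_, eq_smul_of_re_inner_eq_norm_mul_norm hy (by linarith)⟩
  obtain ⟨c, hCx⟩ : ∃ c : 𝕜, C x = c • y :=
    ⟨_, eq_smul_of_re_inner_eq_norm_mul_norm hy (by linarith)⟩
  have hr : r ≠ 0 := by
    rintro rfl
    exact hx (by simpa using hxy)
  refine hx (hAC x (a / r) (c / r) ?_ ?_)
  · rw [hAx, hxy, smul_smul, div_mul_cancel₀ _ hr]
  · rw [hCx, hxy, smul_smul, div_mul_cancel₀ _ hr]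

lemma re_inner_add_add_lt_one_of_no_common_eigenvector {F : Type*} [FunLike F E E]
    [ZeroHomClass F E E] {A C : F}
    (hAC : ∀ (x : E) (a c : 𝕜), A x = a • x → C x = c • x → x = 0) {x y : E}
    (h : ‖x‖ * ‖y‖ + ‖A x‖ * ‖y‖ + ‖C x‖ * ‖y‖ ≤ 1) :
    RCLike.re ⟪y, x + A x + C x⟫_𝕜 < 1 := by
  rcases eq_or_ne x 0 with rfl | hx
  · simp
  rcases eq_or_ne y 0 with rfl | hy
  · simp
  exact (re_inner_add_add_lt_of_no_common_eigenvector hAC hx hy).trans_le h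

end CauchySchwarz

section Trace

variable {H : Type*} [NormedAddCommGroup H] [InnerProductSpace ℂ H]

lemma comp_rankOne (B : H →L[ℂ] H) (x y : H) : B ∘L rankOne x y = rankOne (B x) y := by
  ext f
  simp [rankOne]

lemma trace_rankOne [FiniteDimensional ℂ H] (x y : H) :
    LinearMap.trace ℂ H (rankOne x y) = ⟪y, x⟫_ℂ := by
  simp [rankOne]

lemma trace_comp_smul_one (B : H →L[ℂ] H) (c : ℂ) :
    LinearMap.trace ℂ H (B ∘L (c • 1 : H →L[ℂ] H)) = c * LinearMap.trace ℂ H B := by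
  rw [ContinuousLinearMap.comp_smul, ← ContinuousLinearMap.mul_def, mul_one,
    ContinuousLinearMap.toLinearMap_smul, map_smul, smul_eq_mul]

lemma isLinearMap_re_trace_comp (B : H →L[ℂ] H) :
    IsLinearMap ℝ fun S : H →L[ℂ] H => (LinearMap.trace ℂ H (B ∘L S)).re := by
  constructor
  · intro S T
    simp
  · intro r S
    simp

end Trace

lemma Matrix.trace_toEuclideanCLM {𝕜 n : Type*} [RCLike 𝕜] [Fintype n] [DecidableEq n]
    (M : Matrix n n 𝕜) :
    LinearMap.trace 𝕜 (EuclideanSpace 𝕜 n) (toEuclideanCLM (𝕜 := 𝕜) M) = M.trace := by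
  rw [coe_toEuclideanCLM_eq_toEuclideanLin, toEuclideanLin_eq_toLin_orthonormal, trace_toLin_eq]

lemma trace_one_add_opA_add_opC : LinearMap.trace ℂ ℂ² (1 + opA + opC : ℂ² →L[ℂ] ℂ²) = 8 := by
  norm_num [opA, opC, Matrix.trace_toEuclideanCLM]

lemma opA_opC_no_common_eigenvector (x : ℂ²) (a c : ℂ) (hA : opA x = a • x)
    (hC : opC x = c • x) : x = 0 := by
  have hA0 := congrArg (· 0) hA
  have hA1 := congrArg (· 1) hA
  have hC0 := congrArg (· 0) hC
  have hC1 := congrArg (· 1) hC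
  simp only [opA, opC, Matrix.ofLp_toEuclideanCLM, Matrix.mulVec, dotProduct, Fin.sum_univ_two,
    Matrix.of_apply, Matrix.cons_val', Matrix.cons_val_fin_one, Matrix.cons_val_zero,
    Matrix.cons_val_one, zero_mul, one_mul, add_zero, zero_add, PiLp.smul_apply, smul_eq_mul]
    at hA0 hA1 hC0 hC1
  have hx1 : x 1 = 0 := by
    by_contra hx1
    have ha : a = 1 := mul_right_cancel₀ hx1 (by linear_combination -hA1)
    have hx0 : x 0 = 0 := by linear_combination hA0 + x 0 * ha
    exact hx1 (by linear_combination hC0 - (2 - c) * hx0)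
  have hx0 : x 0 = 0 := by linear_combination hC1 - (1 - c) * hx1
  ext i
  fin_cases i <;> simp [hx0, hx1]

theorem T_not_mem_convexHull :
    ((1 / 8 : ℂ) • (1 : EuclideanSpace ℂ (Fin 2) →L[ℂ] EuclideanSpace ℂ (Fin 2))) ∉
      convexHull ℝ
        {T : EuclideanSpace ℂ (Fin 2) →L[ℂ] EuclideanSpace ℂ (Fin 2) |
          ∃ x y : EuclideanSpace ℂ (Fin 2),
            ‖x‖ * ‖y‖ + ‖opA x‖ * ‖y‖ + ‖opC x‖ * ‖y‖ ≤ 1 ∧ T = rankOne x y} := by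
  intro hT
  have hφ := convexHull_min ?_
    (convex_halfSpace_lt (isLinearMap_re_trace_comp (1 + opA + opC)) 1) hT
  · rw [Set.mem_ofPred_eq, trace_comp_smul_one, trace_one_add_opA_add_opC] at hφ
    norm_num at hφ
  · rintro _ ⟨x, y, hxy, rfl⟩
    rw [Set.mem_ofPred_eq, comp_rankOne, trace_rankOne]
    exact re_inner_add_add_lt_one_of_no_common_eigenvector opA_opC_no_common_eigenvector hxy
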